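/- The restricted wreath product ℤ ≀ ℤ belongs to the class 𝔉. -/
import Mathlib


/-- The closure properties defining the bootstrap class `𝔉` of countable discrete groups:
it contains the trivial group, and is closed under isomorphism, countable directed
unions of subgroups, and extensions by `ℤ`. -/
structure IsFrakCClosed (C : ∀ (G : Type) [Group G], Prop) : Prop where
  /-- `C` contains the trivial group. -/
  triv : C PUnit
  /-- `C` is closed under isomorphism of groups. -/
  iso : ∀ (G H : Type) [Group G] [Group H], (G ≃* H) → C G → C H
  /-- `C` is closed under countable directed unions: if `G` is the union of a countable
  directed family of subgroups each belonging to `C`, then `G` belongs to `C`. -/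
  union : ∀ (G : Type) [Group G] (ι : Type) [Countable ι] (K : ι → Subgroup G),
    Directed (· ≤ ·) K → (∀ i, C (K i)) → (∀ g : G, ∃ i, g ∈ K i) → C G
  /-- `C` is closed under extensions by `ℤ`: if `G` has a normal subgroup `N` belonging
  to `C` with `G ⧸ N ≅ ℤ`, then `G` belongs to `C`. -/
  extZ : ∀ (G : Type) [Group G] (N : Subgroup G) [N.Normal],
    C N → ((G ⧸ N) ≃* Multiplicative ℤ) → C G

/-- Membership in the smallest class `𝔉` of groups containing the trivial group and closed
under isomorphism, countable directed unions, and extensions by `ℤ`. -/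
def MemFrakC (G : Type) [Group G] : Prop :=
  ∀ C : ∀ (G : Type) [Group G], Prop, IsFrakCClosed C → C G


/-- The shift automorphism of the group `⨁_{n ∈ ℤ} ℤ` of finitely supported functions
`ℤ → ℤ` (written multiplicatively), sending `f` to `n ↦ f (n - 1)`. -/
noncomputable def shiftAut : MulAut (Multiplicative (ℤ →₀ ℤ)) :=
  AddEquiv.toMultiplicative (Finsupp.domCongr (Equiv.addRight (1 : ℤ)))

/-- The action of `ℤ` on `⨁_{n ∈ ℤ} ℤ` by shifting the index:
`k` acts by `f ↦ (n ↦ f (n - k))`. -/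
noncomputable def shiftAction : Multiplicative ℤ →* MulAut (Multiplicative (ℤ →₀ ℤ)) :=
  zpowersHom _ shiftAut

lemma memFrakC_of_equiv {G H : Type} [Group G] [Group H] (e : G ≃* H)
    (hG : MemFrakC G) : MemFrakC H := fun C hC => hC.iso G H e (hG C hC)

lemma memFrakC_of_subsingleton (G : Type) [Group G] [Subsingleton G] : MemFrakC G := by
  refine memFrakC_of_equiv (G := PUnit) ?_ (fun C hC => hC.triv)
  exact { toFun := fun _ => 1, invFun := fun _ => PUnit.unit,
          left_inv := fun _ => rfl, right_inv := fun x => Subsingleton.elim _ _,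
          map_mul' := fun _ _ => (mul_one 1).symm }

noncomputable def baseSub (s : Finset ℤ) : Subgroup (Multiplicative (ℤ →₀ ℤ)) where
  carrier := {f | (Multiplicative.toAdd f).support ⊆ s}
  one_mem' := by simp
  mul_mem' := by
    intro a b ha hb
    exact (Finsupp.support_add).trans (Finset.union_subset ha hb)
  inv_mem' := by
    intro a ha
    simpa using ha

lemma mem_baseSub {s : Finset ℤ} {f : Multiplicative (ℤ →₀ ℤ)} :
    f ∈ baseSub s ↔ (Multiplicative.toAdd f).support ⊆ s := Iff.rfl

lemma baseSub_mono {s t : Finset ℤ} (h : s ⊆ t) : baseSub s ≤ baseSub t :=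
  fun _ hf => hf.trans h

lemma memFrakC_baseSub (s : Finset ℤ) : MemFrakC (baseSub s) := by
  classical
  induction s using Finset.induction_on with
  | empty =>
      have : Subsingleton (baseSub (∅ : Finset ℤ)) := by
        constructor
        intro a b
        ext1
        have ha : (Multiplicative.toAdd a.val) = 0 :=
          Finsupp.support_eq_empty.mp (Finset.subset_empty.mp a.2)
        have hb : (Multiplicative.toAdd b.val) = 0 :=
          Finsupp.support_eq_empty.mp (Finset.subset_empty.mp b.2)
        exact ha.trans hb.symm
      exact memFrakC_of_subsingleton _
  | @insert a s ha ih =>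
      intro C hC
      set G := baseSub (insert a s)
      -- evaluation at a
      let φ : G →* Multiplicative ℤ :=
        { toFun := fun g => Multiplicative.ofAdd ((Multiplicative.toAdd g.val) a)
          map_one' := rfl
          map_mul' := fun x y => rfl }
      have hsurj : Function.Surjective φ := by
        intro k
        refine ⟨⟨Multiplicative.ofAdd (Finsupp.single a (Multiplicative.toAdd k)), ?_⟩, ?_⟩
        · exact (Finsupp.support_single_subset).trans (by simp)
        · show Multiplicative.ofAdd ((Finsupp.single a (Multiplicative.toAdd k)) a) = k
          rw [Finsupp.single_eq_same]
          rfl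
      have hker : φ.ker = (baseSub s).subgroupOf G := by
        ext g
        simp only [MonoidHom.mem_ker, Subgroup.mem_subgroupOf, mem_baseSub]
        constructor
        · intro h x hx
          have hx' : x ∈ insert a s := g.2 hx
          have hxa : x ≠ a := by
            rintro rfl
            have : (Multiplicative.toAdd g.val) x = 0 := h
            exact (Finsupp.mem_support_iff.mp hx) this
          exact (Finset.mem_insert.mp hx').resolve_left hxa
        · intro h
          show Multiplicative.ofAdd ((Multiplicative.toAdd g.val) a) = 1
          have : a ∉ (Multiplicative.toAdd g.val).support := fun hx => ha (h hx)
          simp [Finsupp.notMem_support_iff.mp this]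
      have hle : baseSub s ≤ G := baseSub_mono (Finset.subset_insert a s)
      have hN : C φ.ker := by
        refine hC.iso (baseSub s) φ.ker ?_ (ih C hC)
        rw [hker]
        exact (Subgroup.subgroupOfEquivOfLe hle).symm
      exact hC.extZ G φ.ker hN (QuotientGroup.quotientKerEquivOfSurjective φ hsurj)

lemma memFrakC_base : MemFrakC (Multiplicative (ℤ →₀ ℤ)) := by
  intro C hC
  refine hC.union _ ℕ (fun n => baseSub (Finset.Icc (-(n : ℤ)) n)) ?_
    (fun n => memFrakC_baseSub _ C hC) ?_
  · intro m n
    refine ⟨max m n, baseSub_mono ?_, baseSub_mono ?_⟩ <;>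
      · apply Finset.Icc_subset_Icc <;> push_cast <;> omega
  · intro g
    refine ⟨(Multiplicative.toAdd g).support.sup Int.natAbs, fun x hx => ?_⟩
    have := Finset.le_sup (f := Int.natAbs) hx
    simp only [Finset.mem_Icc]
    omega

/-- The restricted wreath product `ℤ ≀ ℤ = (⨁_{n ∈ ℤ} ℤ) ⋊ ℤ`, where `ℤ` acts by shifting
the index, belongs to the class `𝔉`. -/
theorem memFrakC_wreathZZ :
    MemFrakC (Multiplicative (ℤ →₀ ℤ) ⋊[shiftAction] Multiplicative ℤ) := by
  intro C hC
  have hsurj : Function.Surjective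
      (SemidirectProduct.rightHom :
        Multiplicative (ℤ →₀ ℤ) ⋊[shiftAction] Multiplicative ℤ →* Multiplicative ℤ) :=
    fun h => ⟨SemidirectProduct.inr h, SemidirectProduct.rightHom_inr h⟩
  have hkerC : C (SemidirectProduct.rightHom :
      Multiplicative (ℤ →₀ ℤ) ⋊[shiftAction] Multiplicative ℤ →* Multiplicative ℤ).ker := by
    refine hC.iso (Multiplicative (ℤ →₀ ℤ)) _ ?_ (memFrakC_base C hC)
    have : (SemidirectProduct.inl :
        Multiplicative (ℤ →₀ ℤ) →* _ ⋊[shiftAction] Multiplicative ℤ).range =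
        SemidirectProduct.rightHom.ker := SemidirectProduct.range_inl_eq_ker_rightHom
    rw [← this]
    exact MonoidHom.ofInjective SemidirectProduct.inl_injective
  exact hC.extZ _ _ hkerC (QuotientGroup.quotientKerEquivOfSurjective _ hsurj)
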